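/- Assume (A1)–(A3): F : ℝ^d → ℝ is convex, differentiable with L-Lipschitz gradient and λ-strongly convex with λ ≥ 0; H : P2(ℝ^d) → ℝ ∪ {+∞} is proper, lower semicontinuous with respect to W2, and convex along generalized geodesics, with dom(H) contained in the set P2^r(ℝ^d) of measures absolutely continuous with respect to Lebesgue measure; and argmin G ≠ ∅, where G(μ) = ∫ F dμ + H(μ). Let 0 < τ < 1/L and define T_τ(μ) = J_{τ,H}((I − τ∇F)_# μ), where J_{τ,H}(η) is the unique minimizer of ν ↦ H(ν) + (1/(2τ)) W2²(ν, η). Then for every absolutely continuous μ ∈ P2^r(ℝ^d) and every ν ∈ P2(ℝ^d): W2²(T_τ(μ), ν) ≤ (1 − τλ) W2²(μ, ν) − 2τ (G(T_τ(μ)) − G(ν)) − (1 − τL) W2²(μ, T_τ(μ)). -/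

import Mathlib

open MeasureTheory Filter Topology ENNReal

noncomputable section

/-- Euclidean space ℝ^d. -/
abbrev Ed (d : ℕ) := EuclideanSpace ℝ (Fin d)

/-- `P2 d`: Borel probability measures on ℝ^d with finite second moment. -/
def P2 (d : ℕ) : Set (Measure (Ed d)) :=
  {μ | IsProbabilityMeasure μ ∧ ∫⁻ x, ENNReal.ofReal (‖x‖ ^ 2) ∂μ < ⊤}

/-- A coupling of `μ` and `ν`. -/
def IsCoupling {d : ℕ} (γ : Measure (Ed d × Ed d)) (μ ν : Measure (Ed d)) : Prop :=
  IsProbabilityMeasure γ ∧ γ.map Prod.fst = μ ∧ γ.map Prod.snd = ν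

/-- `p`-th power transport cost of a plan `γ`. -/
def Wcost {d : ℕ} (p : ℝ) (γ : Measure (Ed d × Ed d)) : ℝ≥0∞ :=
  ∫⁻ z, ENNReal.ofReal (‖z.1 - z.2‖ ^ p) ∂γ

/-- Minimal `p`-th power transport cost between `μ` and `ν`. -/
def minCost {d : ℕ} (p : ℝ) (μ ν : Measure (Ed d)) : ℝ≥0∞ :=
  ⨅ γ : {γ : Measure (Ed d × Ed d) // IsCoupling γ μ ν}, Wcost p γ.1

/-- The `p`-Wasserstein distance. -/
def Wp {d : ℕ} (p : ℝ) (μ ν : Measure (Ed d)) : ℝ :=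
  (minCost p μ ν ^ (1 / p)).toReal

/-- The 2-Wasserstein distance. -/
def W2 {d : ℕ} (μ ν : Measure (Ed d)) : ℝ := Wp 2 μ ν

/-- Optimal transport plan for the quadratic cost. -/
def IsOptimalPlan {d : ℕ} (γ : Measure (Ed d × Ed d)) (μ ν : Measure (Ed d)) : Prop :=
  IsCoupling γ μ ν ∧ Wcost 2 γ = minCost 2 μ ν

/-- `curve` is a generalized geodesic between `μ0` and `μ1` with base `base`. -/
def IsGenGeodesic {d : ℕ} (curve : ℝ → Measure (Ed d))
    (μ0 μ1 base : Measure (Ed d)) : Prop :=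
  ∃ γ : Measure (Ed d × Ed d × Ed d),
    IsProbabilityMeasure γ ∧
    IsOptimalPlan (γ.map (fun z => (z.1, z.2.1))) base μ0 ∧
    IsOptimalPlan (γ.map (fun z => (z.1, z.2.2))) base μ1 ∧
    ∀ t ∈ Set.Icc (0 : ℝ) 1,
      curve t = γ.map (fun z => (1 - t) • z.2.1 + t • z.2.2)

/-- Convexity along generalized geodesics. -/
def ConvexAlongGenGeod {d : ℕ} (G : Measure (Ed d) → EReal) : Prop :=
  ∀ μ0 ∈ P2 d, ∀ μ1 ∈ P2 d, ∀ base ∈ P2 d,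
    ∃ curve : ℝ → Measure (Ed d), IsGenGeodesic curve μ0 μ1 base ∧
      ∀ t ∈ Set.Icc (0 : ℝ) 1,
        G (curve t) ≤ ((1 - t : ℝ) : EReal) * G μ0 + ((t : ℝ) : EReal) * G μ1

/-- `G` is proper: never `⊥` and finite somewhere on `P2`. -/
def ProperOn {d : ℕ} (G : Measure (Ed d) → EReal) : Prop :=
  (∀ μ, G μ ≠ ⊥) ∧ ∃ μ ∈ P2 d, G μ ≠ ⊤

/-- Sequential lower semicontinuity with respect to `W2`. -/
def LscW2 {d : ℕ} (G : Measure (Ed d) → EReal) : Prop :=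
  ∀ μ ∈ P2 d, ∀ s : ℕ → Measure (Ed d), (∀ n, s n ∈ P2 d) →
    Tendsto (fun n => W2 (s n) μ) atTop (𝓝 0) →
    G μ ≤ liminf (fun n => G (s n)) atTop

/-- The JKO (Moreau–Yosida) energy `ν ↦ G ν + (1/(2τ)) W2²(ν, μ)`. -/
def JKOEnergy {d : ℕ} (G : Measure (Ed d) → EReal) (τ : ℝ)
    (μ ν : Measure (Ed d)) : EReal :=
  G ν + ((1 / (2 * τ) * (W2 ν μ) ^ 2 : ℝ) : EReal)

/-- `ν` is a minimizer over `P2` of the JKO energy with base point `μ`. -/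
def IsJKOMin {d : ℕ} (G : Measure (Ed d) → EReal) (τ : ℝ)
    (μ ν : Measure (Ed d)) : Prop :=
  ν ∈ P2 d ∧ ∀ ρ ∈ P2 d, JKOEnergy G τ μ ν ≤ JKOEnergy G τ μ ρ

/-- `μ` is a global minimizer of `G` over `P2`. -/
def IsArgminG {d : ℕ} (G : Measure (Ed d) → EReal) (μ : Measure (Ed d)) : Prop :=
  μ ∈ P2 d ∧ ∀ ν ∈ P2 d, G μ ≤ G ν

/-- The infimum of `G` over `P2`. -/
def infG {d : ℕ} (G : Measure (Ed d) → EReal) : EReal := sInf (G '' P2 d)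

/-- Convergence in the topology `τ_{w,2}`: integrals of continuous functions with
subquadratic growth converge. -/
def TendstoWeak2 {d : ℕ} (s : ℕ → Measure (Ed d)) (μ : Measure (Ed d)) : Prop :=
  ∀ f : Ed d → ℝ, Continuous f →
    Tendsto (fun x => f x / (1 + ‖x‖ ^ 2)) (comap (fun x : Ed d => ‖x‖) atTop) (𝓝 0) →
    Tendsto (fun n => ∫ x, f x ∂(s n)) atTop (𝓝 (∫ x, f x ∂μ))

/-- Narrow convergence: integrals of bounded continuous functions converge. -/
def TendstoNarrow {d : ℕ} (s : ℕ → Measure (Ed d)) (μ : Measure (Ed d)) : Prop :=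
  ∀ f : Ed d → ℝ, Continuous f → (∃ M, ∀ x, |f x| ≤ M) →
    Tendsto (fun n => ∫ x, f x ∂(s n)) atTop (𝓝 (∫ x, f x ∂μ))

/-- The pushforward by the explicit gradient step `x ↦ x - τ ∇F(x)`. -/
def gradStep {d : ℕ} (f' : Ed d → Ed d) (τ : ℝ) (μ : Measure (Ed d)) : Measure (Ed d) :=
  μ.map (fun x => x - τ • f' x)

/-- The composite objective `G(μ) = ∫ F dμ + H(μ)`. -/
def Gsum {d : ℕ} (F : Ed d → ℝ) (H : Measure (Ed d) → EReal)
    (μ : Measure (Ed d)) : EReal :=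
  ((∫ x, F x ∂μ : ℝ) : EReal) + H μ

end
noncomputable section Helpers

open MeasureTheory ENNReal Filter Topology

variable {d : ℕ}

/-- second moment -/
def m2 (μ : Measure (Ed d)) : ℝ≥0∞ := ∫⁻ x, ENNReal.ofReal (‖x‖ ^ 2) ∂μ

lemma p2_prob {μ : Measure (Ed d)} (h : μ ∈ P2 d) : IsProbabilityMeasure μ := h.1

lemma p2_m2 {μ : Measure (Ed d)} (h : μ ∈ P2 d) : m2 μ < ⊤ := h.2

lemma wcost_two (γ : Measure (Ed d × Ed d)) :
    Wcost 2 γ = ∫⁻ z, ENNReal.ofReal (‖z.1 - z.2‖ ^ 2) ∂γ := by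
  unfold Wcost
  refine lintegral_congr fun z => ?_
  congr 1
  rw [show (2:ℝ) = ((2:ℕ):ℝ) by norm_num, Real.rpow_natCast]

lemma lintegral_fst {γ : Measure (Ed d × Ed d)} {μ : Measure (Ed d)}
    (h : γ.map Prod.fst = μ) (f : Ed d → ℝ≥0∞) (hf : Measurable f) :
    ∫⁻ z, f z.1 ∂γ = ∫⁻ x, f x ∂μ := by
  rw [← h, lintegral_map hf measurable_fst]

lemma lintegral_snd {γ : Measure (Ed d × Ed d)} {ν : Measure (Ed d)}
    (h : γ.map Prod.snd = ν) (f : Ed d → ℝ≥0∞) (hf : Measurable f) :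
    ∫⁻ z, f z.2 ∂γ = ∫⁻ x, f x ∂ν := by
  rw [← h, lintegral_map hf measurable_snd]

lemma integral_fst {γ : Measure (Ed d × Ed d)} {μ : Measure (Ed d)}
    (h : γ.map Prod.fst = μ) (f : Ed d → ℝ) (hf : AEStronglyMeasurable f μ) :
    ∫ z, f z.1 ∂γ = ∫ x, f x ∂μ := by
  rw [← h] at hf ⊢
  rw [integral_map measurable_fst.aemeasurable hf]

lemma integral_snd {γ : Measure (Ed d × Ed d)} {ν : Measure (Ed d)}
    (h : γ.map Prod.snd = ν) (f : Ed d → ℝ) (hf : AEStronglyMeasurable f ν) :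
    ∫ z, f z.2 ∂γ = ∫ x, f x ∂ν := by
  rw [← h] at hf ⊢
  rw [integral_map measurable_snd.aemeasurable hf]

lemma IsCoupling.symm {γ : Measure (Ed d × Ed d)} {μ ν : Measure (Ed d)}
    (h : IsCoupling γ μ ν) : IsCoupling (γ.map Prod.swap) ν μ := by
  obtain ⟨hp, h1, h2⟩ := h
  refine ⟨by exact Measure.isProbabilityMeasure_map measurable_swap.aemeasurable, ?_, ?_⟩
  · rw [Measure.map_map measurable_fst measurable_swap]; exact h2
  · rw [Measure.map_map measurable_snd measurable_swap]; exact h1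

lemma wcost_swap (γ : Measure (Ed d × Ed d)) :
    Wcost 2 (γ.map Prod.swap) = Wcost 2 γ := by
  rw [wcost_two, wcost_two, lintegral_map (by fun_prop) measurable_swap]
  refine lintegral_congr fun z => by rw [norm_sub_rev]; rfl

lemma minCost_le_wcost {γ : Measure (Ed d × Ed d)} {μ ν : Measure (Ed d)}
    (h : IsCoupling γ μ ν) : minCost 2 μ ν ≤ Wcost 2 γ :=
  iInf_le (fun γ : {γ : Measure (Ed d × Ed d) // IsCoupling γ μ ν} => Wcost 2 γ.1) ⟨γ, h⟩

lemma minCost_symm (μ ν : Measure (Ed d)) : minCost 2 μ ν = minCost 2 ν μ := by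
  have key : ∀ μ ν : Measure (Ed d), minCost 2 μ ν ≤ minCost 2 ν μ := by
    intro μ ν
    refine le_iInf fun ⟨γ, hγ⟩ => ?_
    calc minCost 2 μ ν ≤ Wcost 2 (γ.map Prod.swap) := minCost_le_wcost hγ.symm
    _ = Wcost 2 γ := wcost_swap γ
  exact le_antisymm (key μ ν) (key ν μ)

lemma isCoupling_prod (μ ν : Measure (Ed d)) [IsProbabilityMeasure μ]
    [IsProbabilityMeasure ν] : IsCoupling (μ.prod ν) μ ν := by
  refine ⟨by infer_instance, ?_, ?_⟩ <;> simp

lemma sq_add_bound (a b : Ed d) : ‖a - b‖ ^ 2 ≤ 2 * ‖a‖ ^ 2 + 2 * ‖b‖ ^ 2 := by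
  have h1 : ‖a - b‖ ≤ ‖a‖ + ‖b‖ := norm_sub_le a b
  nlinarith [norm_nonneg (a - b), norm_nonneg a, norm_nonneg b, sq_nonneg (‖a‖ - ‖b‖),
    pow_le_pow_left₀ (norm_nonneg (a - b)) h1 2]

lemma wcost_le_m2 {γ : Measure (Ed d × Ed d)} {μ ν : Measure (Ed d)}
    (h : IsCoupling γ μ ν) : Wcost 2 γ ≤ 2 * m2 μ + 2 * m2 ν := by
  rw [wcost_two]
  have hb : ∀ z : Ed d × Ed d, ENNReal.ofReal (‖z.1 - z.2‖ ^ 2) ≤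
      2 * ENNReal.ofReal (‖z.1‖ ^ 2) + 2 * ENNReal.ofReal (‖z.2‖ ^ 2) := by
    intro z
    calc ENNReal.ofReal (‖z.1 - z.2‖ ^ 2) ≤ ENNReal.ofReal (2 * ‖z.1‖ ^ 2 + 2 * ‖z.2‖ ^ 2) :=
      ENNReal.ofReal_le_ofReal (sq_add_bound _ _)
    _ ≤ 2 * ENNReal.ofReal (‖z.1‖ ^ 2) + 2 * ENNReal.ofReal (‖z.2‖ ^ 2) := by
      rw [ENNReal.ofReal_add (by positivity) (by positivity)]
      gcongr <;> rw [ENNReal.ofReal_mul (by norm_num)] <;> simp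
  calc ∫⁻ z, ENNReal.ofReal (‖z.1 - z.2‖ ^ 2) ∂γ
      ≤ ∫⁻ z, (2 * ENNReal.ofReal (‖z.1‖ ^ 2) + 2 * ENNReal.ofReal (‖z.2‖ ^ 2)) ∂γ :=
        lintegral_mono hb
    _ = 2 * m2 μ + 2 * m2 ν := by
        rw [lintegral_add_left (by fun_prop), lintegral_const_mul _ (by fun_prop),
          lintegral_const_mul _ (by fun_prop)]
        have e1 : ∫⁻ a : Ed d × Ed d, ENNReal.ofReal (‖a.1‖ ^ 2) ∂γ = m2 μ :=
          lintegral_fst h.2.1 (fun x => ENNReal.ofReal (‖x‖ ^ 2)) (by fun_prop)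
        have e2 : ∫⁻ a : Ed d × Ed d, ENNReal.ofReal (‖a.2‖ ^ 2) ∂γ = m2 ν :=
          lintegral_snd h.2.2 (fun x => ENNReal.ofReal (‖x‖ ^ 2)) (by fun_prop)
        rw [e1, e2]

lemma minCost_lt_top {μ ν : Measure (Ed d)} (hμ : μ ∈ P2 d) (hν : ν ∈ P2 d) :
    minCost 2 μ ν < ⊤ := by
  haveI := p2_prob hμ; haveI := p2_prob hν
  calc minCost 2 μ ν ≤ Wcost 2 (μ.prod ν) := minCost_le_wcost (isCoupling_prod μ ν)
  _ ≤ 2 * m2 μ + 2 * m2 ν := wcost_le_m2 (isCoupling_prod μ ν)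
  _ < ⊤ := by
      have := p2_m2 hμ; have := p2_m2 hν
      finiteness

lemma W2_sq {μ ν : Measure (Ed d)} (h : minCost 2 μ ν ≠ ⊤) :
    (W2 μ ν) ^ 2 = (minCost 2 μ ν).toReal := by
  unfold W2 Wp
  rw [← ENNReal.toReal_pow]
  congr 1
  rw [← ENNReal.rpow_natCast (minCost 2 μ ν ^ (1/(2:ℝ))) 2, ← ENNReal.rpow_mul]
  norm_num

end Helpers
noncomputable section Helpers2

open MeasureTheory ENNReal Filter Topology

variable {d : ℕ}

lemma integrable_sq_p2 {μ : Measure (Ed d)} (hμ : μ ∈ P2 d) :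
    Integrable (fun x : Ed d => ‖x‖ ^ 2) μ := by
  refine ⟨(by fun_prop : Continuous fun x : Ed d => ‖x‖ ^ 2).aestronglyMeasurable, ?_⟩
  rw [hasFiniteIntegral_iff_norm]
  have : ∀ x : Ed d, ENNReal.ofReal ‖‖x‖ ^ 2‖ = ENNReal.ofReal (‖x‖ ^ 2) := by
    intro x; rw [Real.norm_of_nonneg (by positivity)]
  calc ∫⁻ x, ENNReal.ofReal ‖‖x‖ ^ 2‖ ∂μ = m2 μ := lintegral_congr fun x => by rw [this]
  _ < ⊤ := p2_m2 hμ

/-- integrability of functions with quadratic growth on a coupling -/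
lemma coupling_integrable {γ : Measure (Ed d × Ed d)} {μ ν : Measure (Ed d)}
    (h : IsCoupling γ μ ν) (hμ : μ ∈ P2 d) (hν : ν ∈ P2 d)
    (g : Ed d × Ed d → ℝ) (hg : Continuous g) (c0 c1 c2 : ℝ)
    (hb : ∀ z : Ed d × Ed d, |g z| ≤ c0 + c1 * ‖z.1‖ ^ 2 + c2 * ‖z.2‖ ^ 2) :
    Integrable g γ := by
  haveI := h.1
  have h1 : Integrable (fun z : Ed d × Ed d => ‖z.1‖ ^ 2) γ := by
    have := integrable_sq_p2 hμ
    rw [← h.2.1] at this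
    exact (integrable_map_measure
      (by fun_prop : Continuous fun x : Ed d => ‖x‖ ^ 2).aestronglyMeasurable
      measurable_fst.aemeasurable).mp this
  have h2 : Integrable (fun z : Ed d × Ed d => ‖z.2‖ ^ 2) γ := by
    have := integrable_sq_p2 hν
    rw [← h.2.2] at this
    exact (integrable_map_measure
      (by fun_prop : Continuous fun x : Ed d => ‖x‖ ^ 2).aestronglyMeasurable
      measurable_snd.aemeasurable).mp this
  have hdom : Integrable (fun z : Ed d × Ed d => c0 + c1 * ‖z.1‖ ^ 2 + c2 * ‖z.2‖ ^ 2) γ :=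
    ((integrable_const c0).add (h1.const_mul c1)).add (h2.const_mul c2)
  exact hdom.mono' hg.aestronglyMeasurable (Filter.Eventually.of_forall fun z => hb z)

lemma wcost_toReal {γ : Measure (Ed d × Ed d)} {μ ν : Measure (Ed d)}
    (h : IsCoupling γ μ ν) (hμ : μ ∈ P2 d) (hν : ν ∈ P2 d) :
    (Wcost 2 γ).toReal = ∫ z, ‖z.1 - z.2‖ ^ 2 ∂γ := by
  have hint : Integrable (fun z : Ed d × Ed d => ‖z.1 - z.2‖ ^ 2) γ :=
    coupling_integrable h hμ hν _ (by fun_prop) 0 2 2 (fun z => by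
      rw [abs_of_nonneg (by positivity)]
      have := sq_add_bound z.1 z.2; linarith)
  rw [wcost_two, ← MeasureTheory.ofReal_integral_eq_lintegral_ofReal hint
    (Filter.Eventually.of_forall fun z => by positivity),
    ENNReal.toReal_ofReal (integral_nonneg fun z => by positivity)]

lemma wcost_ne_top {γ : Measure (Ed d × Ed d)} {μ ν : Measure (Ed d)}
    (h : IsCoupling γ μ ν) (hμ : μ ∈ P2 d) (hν : ν ∈ P2 d) : Wcost 2 γ ≠ ⊤ := by
  have h1 := p2_m2 hμ; have h2 := p2_m2 hν
  exact ne_top_of_le_ne_top (by finiteness) (wcost_le_m2 h)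

/-- W2² as integral over an optimal plan -/
lemma W2_sq_eq_integral {γ : Measure (Ed d × Ed d)} {μ ν : Measure (Ed d)}
    (h : IsOptimalPlan γ μ ν) (hμ : μ ∈ P2 d) (hν : ν ∈ P2 d) :
    (W2 μ ν) ^ 2 = ∫ z, ‖z.1 - z.2‖ ^ 2 ∂γ := by
  rw [W2_sq (minCost_lt_top hμ hν).ne, ← h.2, wcost_toReal h.1 hμ hν]

/-- W2² upper bound from a coupling -/
lemma W2_sq_le_integral {γ : Measure (Ed d × Ed d)} {μ ν : Measure (Ed d)}
    (h : IsCoupling γ μ ν) (hμ : μ ∈ P2 d) (hν : ν ∈ P2 d) :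
    (W2 μ ν) ^ 2 ≤ ∫ z, ‖z.1 - z.2‖ ^ 2 ∂γ := by
  rw [W2_sq (minCost_lt_top hμ hν).ne, ← wcost_toReal h hμ hν]
  exact ENNReal.toReal_mono (wcost_ne_top h hμ hν) (minCost_le_wcost h)

lemma W2_symm (μ ν : Measure (Ed d)) : W2 μ ν = W2 ν μ := by
  unfold W2 Wp; rw [minCost_symm]

end Helpers2
noncomputable section Helpers3

open MeasureTheory ENNReal Filter Topology

variable {d : ℕ}

local notation "⟪" x ", " y "⟫" => @inner ℝ _ _ x y

lemma grad_line {F : Ed d → ℝ} {f' : Ed d → Ed d} (hFgrad : ∀ x, HasGradientAt F (f' x) x)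
    (x v : Ed d) (t : ℝ) :
    HasDerivAt (fun s : ℝ => F (x + s • v)) ⟪f' (x + t • v), v⟫ t := by
  have h1 : HasDerivAt (fun s : ℝ => x + s • v) v t := by
    simpa using ((hasDerivAt_id t).smul_const v).const_add x
  have h2 := (hFgrad (x + t • v)).hasFDerivAt.comp_hasDerivAt t h1
  have h3 : HasDerivAt (F ∘ fun s : ℝ => x + s • v) ⟪f' (x + t • v), v⟫ t := by simpa using h2
  exact h3

lemma convex_line {φ : Ed d → ℝ} (hφ : ConvexOn ℝ Set.univ φ) (x y : Ed d) (D : ℝ)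
    (hD : HasDerivAt (fun t : ℝ => φ (x + t • (y - x))) D 0) : φ x + D ≤ φ y := by
  set ψ : ℝ → ℝ := fun t => φ (x + t • (y - x)) with hψ
  have hψ0 : ψ 0 = φ x := by simp [hψ]
  have hψ1 : ψ 1 = φ y := by simp [hψ]
  have hslope : ∀ t : ℝ, t ∈ Set.Ioo (0:ℝ) 1 → slope ψ 0 t ≤ ψ 1 - ψ 0 := by
    intro t ht
    have hconv : ψ t ≤ (1 - t) * ψ 0 + t * ψ 1 := by
      have h := hφ.2 (Set.mem_univ (x + (0:ℝ) • (y - x))) (Set.mem_univ (x + (1:ℝ) • (y - x)))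
        (by linarith [ht.2] : (0:ℝ) ≤ 1 - t) (le_of_lt ht.1) (by ring)
      have harg : (1 - t) • (x + (0:ℝ) • (y - x)) + t • (x + (1:ℝ) • (y - x)) =
          x + t • (y - x) := by module
      rw [harg] at h
      simpa [hψ, smul_eq_mul] using h
    rw [slope_def_field, sub_zero, div_le_iff₀ ht.1]
    nlinarith [ht.1, ht.2]
  have htend : Tendsto (slope ψ 0) (𝓝[>] (0:ℝ)) (𝓝 D) :=
    (hasDerivAt_iff_tendsto_slope.mp hD).mono_left
      (nhdsWithin_mono 0 (fun t ht => Set.mem_compl_singleton_iff.mpr (ne_of_gt ht)))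
  have hev : ∀ᶠ t in 𝓝[>] (0:ℝ), slope ψ 0 t ≤ ψ 1 - ψ 0 := by
    filter_upwards [Ioo_mem_nhdsGT_of_mem (Set.mem_Ico.mpr ⟨le_refl 0, zero_lt_one⟩)]
      with t ht using hslope t ht
  have : D ≤ ψ 1 - ψ 0 := le_of_tendsto htend hev
  rw [hψ0, hψ1] at this; linarith

/-- descent lemma -/
lemma descent_lemma {F : Ed d → ℝ} {f' : Ed d → Ed d} (hFgrad : ∀ x, HasGradientAt F (f' x) x)
    {L : ℝ} (hL : 0 < L) (hLip : LipschitzWith L.toNNReal f') (x y : Ed d) :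
    F y ≤ F x + ⟪f' x, y - x⟫ + L / 2 * ‖y - x‖ ^ 2 := by
  set v := y - x with hv
  set g : ℝ → ℝ := fun t => F (x + t • v) - t * ⟪f' x, v⟫ - L / 2 * t ^ 2 * ‖v‖ ^ 2 with hg
  have hlip' : ∀ a b : Ed d, ‖f' a - f' b‖ ≤ L * ‖a - b‖ := by
    intro a b
    have := hLip.dist_le_mul a b
    rwa [dist_eq_norm, dist_eq_norm, Real.coe_toNNReal L hL.le] at this
  have hderiv : ∀ t : ℝ, HasDerivAt g
      (⟪f' (x + t • v), v⟫ - ⟪f' x, v⟫ - L * t * ‖v‖ ^ 2) t := by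
    intro t
    have h1 := grad_line hFgrad x v t
    have h2 : HasDerivAt (fun t : ℝ => t * ⟪f' x, v⟫) ⟪f' x, v⟫ t := by
      simpa using (hasDerivAt_id t).mul_const (⟪f' x, v⟫)
    have h3 : HasDerivAt (fun t : ℝ => L / 2 * t ^ 2 * ‖v‖ ^ 2) (L * t * ‖v‖ ^ 2) t := by
      have : HasDerivAt (fun t : ℝ => t ^ 2) (2 * t) t := by
        simpa using hasDerivAt_pow 2 t
      have h4 := (this.const_mul (L / 2)).mul_const (‖v‖ ^ 2)
      exact h4.congr_deriv (by ring)
    exact (h1.sub h2).sub h3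
  have hmono : g 1 ≤ g 0 := by
    have hanti : AntitoneOn g (Set.Icc (0:ℝ) 1) := by
      refine antitoneOn_of_deriv_nonpos (convex_Icc 0 1)
        (fun t _ => ((hderiv t).continuousAt).continuousWithinAt)
        (fun t _ => ((hderiv t).differentiableAt).differentiableWithinAt) ?_
      intro t ht
      rw [interior_Icc] at ht
      rw [(hderiv t).deriv]
      have hb : ⟪f' (x + t • v) - f' x, v⟫ ≤ L * t * ‖v‖ ^ 2 := by
        calc ⟪f' (x + t • v) - f' x, v⟫ ≤ ‖f' (x + t • v) - f' x‖ * ‖v‖ :=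
          real_inner_le_norm _ _
        _ ≤ L * ‖(x + t • v) - x‖ * ‖v‖ := by
            have := hlip' (x + t • v) x
            have hn : (0:ℝ) ≤ ‖v‖ := norm_nonneg v
            nlinarith [norm_nonneg (f' (x + t • v) - f' x)]
        _ = L * t * ‖v‖ ^ 2 := by
            rw [add_sub_cancel_left, norm_smul, Real.norm_of_nonneg ht.1.le]; ring
      rw [inner_sub_left] at hb
      linarith
    exact hanti (Set.left_mem_Icc.mpr zero_le_one) (Set.right_mem_Icc.mpr zero_le_one)
      zero_le_one
  have h0 : g 0 = F x := by simp [hg]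
  have h1' : g 1 = F y - ⟪f' x, v⟫ - L / 2 * ‖v‖ ^ 2 := by simp [hg, hv]
  rw [h0, h1'] at hmono
  linarith

/-- strong convexity lower bound -/
lemma strong_lower {F : Ed d → ℝ} {f' : Ed d → Ed d} (hFgrad : ∀ x, HasGradientAt F (f' x) x)
    {lam : ℝ}
    (hstrong : ConvexOn ℝ Set.univ (fun x => F x - lam / 2 * ‖x‖ ^ 2)) (x y : Ed d) :
    F x + ⟪f' x, y - x⟫ + lam / 2 * ‖y - x‖ ^ 2 ≤ F y := by
  set v := y - x with hv
  set φ : Ed d → ℝ := fun x => F x - lam / 2 * ‖x‖ ^ 2 with hφ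
  have hq : ∀ t : ℝ, ‖x + t • v‖ ^ 2 = ‖x‖ ^ 2 + 2 * t * ⟪x, v⟫ + t ^ 2 * ‖v‖ ^ 2 := by
    intro t
    rw [norm_add_sq_real, real_inner_smul_right, norm_smul, Real.norm_eq_abs, mul_pow, sq_abs]
    ring
  have hD : HasDerivAt (fun t : ℝ => φ (x + t • v)) (⟪f' x, v⟫ - lam * ⟪x, v⟫) 0 := by
    have h1 : HasDerivAt (fun t : ℝ => F (x + t • v)) ⟪f' x, v⟫ 0 := by
      have := grad_line hFgrad x v 0
      simpa using this
    have h2 : HasDerivAt (fun t : ℝ => lam / 2 * ‖x + t • v‖ ^ 2) (lam * ⟪x, v⟫) 0 := by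
      have hpoly : HasDerivAt (fun t : ℝ =>
          lam / 2 * (‖x‖ ^ 2 + 2 * t * ⟪x, v⟫ + t ^ 2 * ‖v‖ ^ 2)) (lam * ⟪x, v⟫) 0 := by
        have ha : HasDerivAt (fun t : ℝ => ‖x‖ ^ 2 + 2 * t * ⟪x, v⟫ + t ^ 2 * ‖v‖ ^ 2)
            (2 * ⟪x, v⟫ + 2 * 0 * ‖v‖ ^ 2) 0 := by
          have hb : HasDerivAt (fun t : ℝ => 2 * t * ⟪x, v⟫) (2 * ⟪x, v⟫) 0 := by
            simpa using ((hasDerivAt_id (0:ℝ)).const_mul 2).mul_const (⟪x, v⟫)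
          have hc : HasDerivAt (fun t : ℝ => t ^ 2 * ‖v‖ ^ 2) (2 * 0 * ‖v‖ ^ 2) 0 := by
            have : HasDerivAt (fun t : ℝ => t ^ 2) (2 * 0) 0 := by
              simpa using hasDerivAt_pow 2 (0:ℝ)
            simpa using this.mul_const (‖v‖ ^ 2)
          exact (hb.const_add (‖x‖ ^ 2)).add hc
        have := ha.const_mul (lam / 2)
        exact this.congr_deriv (by ring)
      have : (fun t : ℝ => lam / 2 * ‖x + t • v‖ ^ 2) =
          fun t : ℝ => lam / 2 * (‖x‖ ^ 2 + 2 * t * ⟪x, v⟫ + t ^ 2 * ‖v‖ ^ 2) := by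
        funext t; rw [hq t]
      rw [this]
      exact hpoly
    exact h1.sub h2
  have := convex_line hstrong x y _ hD
  simp only [hφ] at this
  have hxx : ⟪x, x⟫ = ‖x‖ ^ 2 := real_inner_self_eq_norm_sq x
  have hxy : ⟪x, y⟫ = ⟪y, x⟫ := real_inner_comm y x
  have hnorm : ‖y‖ ^ 2 - ‖x‖ ^ 2 - 2 * ⟪x, v⟫ = ‖v‖ ^ 2 := by
    rw [hv, inner_sub_right, hxx, hxy, norm_sub_sq_real]
    ring
  have h2 : lam / 2 * ‖v‖ ^ 2 = lam / 2 * ‖y‖ ^ 2 - lam / 2 * ‖x‖ ^ 2 - lam * ⟪x, v⟫ := by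
    linear_combination (lam / 2) * hnorm.symm
  linarith

end Helpers3
noncomputable section Helpers4

open MeasureTheory ENNReal Filter Topology

variable {d : ℕ}

local notation "⟪" x ", " y "⟫" => @inner ℝ _ _ x y

lemma lip_norm {f' : Ed d → Ed d} {L : ℝ} (hL : 0 < L) (hLip : LipschitzWith L.toNNReal f')
    (a b : Ed d) : ‖f' a - f' b‖ ≤ L * ‖a - b‖ := by
  have := hLip.dist_le_mul a b
  rwa [dist_eq_norm, dist_eq_norm, Real.coe_toNNReal L hL.le] at this

lemma f'_growth {f' : Ed d → Ed d} {L : ℝ} (hL : 0 < L) (hLip : LipschitzWith L.toNNReal f')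
    (x : Ed d) : ‖f' x‖ ≤ ‖f' 0‖ + L * ‖x‖ := by
  have h := lip_norm hL hLip x 0
  have h3 : f' x = f' 0 + (f' x - f' 0) := by abel
  calc ‖f' x‖ = ‖f' 0 + (f' x - f' 0)‖ := by rw [← h3]
  _ ≤ ‖f' 0‖ + ‖f' x - f' 0‖ := norm_add_le _ _
  _ ≤ ‖f' 0‖ + L * ‖x‖ := by
      have h4 : ‖x - 0‖ = ‖x‖ := by simp
      rw [h4] at h; linarith

lemma F_growth {F : Ed d → ℝ} {f' : Ed d → Ed d} (hFconv : ConvexOn ℝ Set.univ F)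
    (hFgrad : ∀ x, HasGradientAt F (f' x) x)
    {L : ℝ} (hL : 0 < L) (hLip : LipschitzWith L.toNNReal f') (x : Ed d) :
    |F x| ≤ |F 0| + ‖f' 0‖ * ‖x‖ + L * ‖x‖ ^ 2 := by
  have hub : F x ≤ F 0 + ⟪f' 0, x - 0⟫ + L / 2 * ‖x - 0‖ ^ 2 :=
    descent_lemma hFgrad hL hLip 0 x
  have hlb : F 0 + ⟪f' 0, x - 0⟫ ≤ F x := by
    have h := convex_line hFconv 0 x ⟪f' 0, x - (0:Ed d)⟫ ?_
    · simpa using h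
    · have h2 := grad_line hFgrad 0 (x - (0:Ed d)) 0
      have h3 : (0:Ed d) + (0:ℝ) • (x - 0) = 0 := by simp
      rw [h3] at h2
      exact h2
  have h1 : |⟪f' 0, x - 0⟫| ≤ ‖f' 0‖ * ‖x‖ := by
    have := abs_real_inner_le_norm (f' 0) (x - 0)
    simpa using this
  rw [abs_le] at h1
  simp only [sub_zero] at hub h1 hlb
  obtain ⟨h1a, h1b⟩ := h1
  rw [abs_le]
  constructor
  · have := neg_abs_le (F 0)
    nlinarith [norm_nonneg x, norm_nonneg (f' 0), hL.le, sq_nonneg ‖x‖]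
  · have := le_abs_self (F 0)
    nlinarith [norm_nonneg x, sq_nonneg ‖x‖, hL.le]

/-- The inverse of the gradient step map. -/
lemma exists_inverse {f' : Ed d → Ed d} {L : ℝ} (hL : 0 < L)
    (hLip : LipschitzWith L.toNNReal f') {τ : ℝ} (hτ0 : 0 < τ) (hτL : τ * L < 1) :
    ∃ S : Ed d → Ed d, Continuous S ∧ (∀ y, S y - τ • f' (S y) = y) ∧
      (∀ x, S (x - τ • f' x) = x) := by
  have hτL0 : 0 ≤ τ * L := by positivity
  set K : NNReal := (τ * L).toNNReal with hK
  have hK1 : K < 1 := by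
    rw [hK, ← Real.toNNReal_one]
    exact (Real.toNNReal_lt_toNNReal_iff_of_nonneg hτL0).mpr hτL
  have hlipg : ∀ y : Ed d, LipschitzWith K (fun x => y + τ • f' x) := by
    intro y
    rw [lipschitzWith_iff_dist_le_mul]
    intro a b
    rw [dist_add_left, dist_eq_norm, ← smul_sub, norm_smul, Real.norm_of_nonneg hτ0.le]
    have hlb := lip_norm hL hLip a b
    rw [Real.coe_toNNReal _ hτL0, dist_eq_norm]
    calc τ * ‖f' a - f' b‖ ≤ τ * (L * ‖a - b‖) := by nlinarith
    _ = τ * L * ‖a - b‖ := by ring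
  have hcon : ∀ y : Ed d, ContractingWith K (fun x => y + τ • f' x) :=
    fun y => ⟨hK1, hlipg y⟩
  haveI : Nonempty (Ed d) := ⟨0⟩
  set S : Ed d → Ed d := fun y => (hcon y).fixedPoint with hS
  have hfix : ∀ y, S y = y + τ • f' (S y) := by
    intro y
    have := (hcon y).fixedPoint_isFixedPt
    exact this.symm
  have hTS : ∀ y, S y - τ • f' (S y) = y := by
    intro y
    nth_rewrite 1 [hfix y]
    abel
  have hST : ∀ x, S (x - τ • f' x) = x := by
    intro x
    have hfp : Function.IsFixedPt (fun z => (x - τ • f' x) + τ • f' z) x := by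
      show x - τ • f' x + τ • f' x = x
      abel
    exact ((hcon (x - τ • f' x)).fixedPoint_unique hfp).symm
  have hScont : Continuous S := by
    rw [continuous_iff_continuousAt]
    intro y
    have hlipS : LipschitzWith ((1 - τ * L)⁻¹).toNNReal S := by
      rw [lipschitzWith_iff_dist_le_mul]
      intro a b
      have h1 : dist (S a) (S b) ≤ dist a b + τ * L * dist (S a) (S b) := by
        calc dist (S a) (S b) = dist (a + τ • f' (S a)) (b + τ • f' (S b)) := by
              rw [← hfix a, ← hfix b]
        _ ≤ dist (a + τ • f' (S a)) (a + τ • f' (S b)) +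
            dist (a + τ • f' (S b)) (b + τ • f' (S b)) := dist_triangle _ _ _
        _ ≤ τ * L * dist (S a) (S b) + dist a b := by
            gcongr
            · rw [dist_add_left, dist_eq_norm, ← smul_sub, norm_smul,
                Real.norm_of_nonneg hτ0.le]
              have := lip_norm hL hLip (S a) (S b)
              rw [dist_eq_norm]
              nlinarith
            · rw [dist_add_right]
        _ = dist a b + τ * L * dist (S a) (S b) := by ring
      have h2 : (1 - τ * L) * dist (S a) (S b) ≤ dist a b := by linarith
      have h3 : (0:ℝ) < 1 - τ * L := by linarith
      rw [Real.coe_toNNReal _ (inv_nonneg.mpr h3.le)]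
      have h4 : dist (S a) (S b) ≤ dist a b / (1 - τ * L) := by
        rw [le_div_iff₀ h3]; nlinarith
      rw [div_eq_inv_mul] at h4
      exact h4
    exact hlipS.continuous.continuousAt
  exact ⟨S, hScont, hTS, hST⟩

/-- P2 is preserved by maps of quadratic growth. -/
lemma p2_map {μ : Measure (Ed d)} (hμ : μ ∈ P2 d) (g : Ed d → Ed d) (hg : Measurable g)
    (a b : ℝ) (ha : 0 ≤ a) (hb : 0 ≤ b) (hgb : ∀ x, ‖g x‖ ^ 2 ≤ a + b * ‖x‖ ^ 2) :
    μ.map g ∈ P2 d := by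
  haveI := p2_prob hμ
  refine ⟨Measure.isProbabilityMeasure_map hg.aemeasurable, ?_⟩
  rw [lintegral_map (by fun_prop) hg]
  calc ∫⁻ x, ENNReal.ofReal (‖g x‖ ^ 2) ∂μ
      ≤ ∫⁻ x, (ENNReal.ofReal a + ENNReal.ofReal b * ENNReal.ofReal (‖x‖ ^ 2)) ∂μ := by
        refine lintegral_mono fun x => ?_
        calc ENNReal.ofReal (‖g x‖ ^ 2) ≤ ENNReal.ofReal (a + b * ‖x‖ ^ 2) :=
          ENNReal.ofReal_le_ofReal (hgb x)
        _ ≤ ENNReal.ofReal a + ENNReal.ofReal b * ENNReal.ofReal (‖x‖ ^ 2) := by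
            rw [ENNReal.ofReal_add ha (by positivity), ENNReal.ofReal_mul hb]
    _ = ENNReal.ofReal a + ENNReal.ofReal b * m2 μ := by
        rw [lintegral_add_left (by fun_prop), lintegral_const_mul _ (by fun_prop),
          lintegral_const]
        simp [m2]
    _ < ⊤ := by
        have := p2_m2 hμ
        finiteness

end Helpers4
noncomputable section Helpers5

open MeasureTheory ENNReal Filter Topology

variable {d : ℕ}

local notation "⟪" x ", " y "⟫" => @inner ℝ _ _ x y

lemma coupling_map_right {γ : Measure (Ed d × Ed d)} {μ ν : Measure (Ed d)}
    (h : IsCoupling γ μ ν) (g : Ed d → Ed d) (hg : Measurable g) :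
    IsCoupling (γ.map (fun p => (p.1, g p.2))) μ (ν.map g) := by
  haveI := h.1
  have hm : Measurable fun p : Ed d × Ed d => (p.1, g p.2) :=
    measurable_fst.prodMk (hg.comp measurable_snd)
  refine ⟨Measure.isProbabilityMeasure_map hm.aemeasurable, ?_, ?_⟩
  · rw [Measure.map_map measurable_fst hm]
    exact h.2.1
  · rw [Measure.map_map measurable_snd hm]
    have : (Prod.snd ∘ fun p : Ed d × Ed d => (p.1, g p.2)) = g ∘ Prod.snd := rfl
    rw [this, ← Measure.map_map hg measurable_snd, h.2.2]

/-- the parallelogram-type identity for interpolation -/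
lemma interp_identity (u v w : Ed d) (t : ℝ) :
    ‖((1 - t) • u + t • v) - w‖ ^ 2 =
      (1 - t) * ‖u - w‖ ^ 2 + t * ‖v - w‖ ^ 2 - t * (1 - t) * ‖u - v‖ ^ 2 := by
  have h1 : ((1 - t) • u + t • v) - w = (1 - t) • (u - w) + t • (v - w) := by module
  have h2 : u - v = (u - w) - (v - w) := by abel
  rw [h1, h2]
  set p := u - w
  set q := v - w
  have hp : ∀ a : Ed d, ‖a‖ ^ 2 = ⟪a, a⟫ := fun a => (real_inner_self_eq_norm_sq a).symm
  simp only [hp, inner_add_left, inner_add_right, inner_sub_left, inner_sub_right,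
    real_inner_smul_left, real_inner_smul_right]
  rw [real_inner_comm q p]
  ring

lemma expand_T {f' : Ed d → Ed d} (τ : ℝ) (x y : Ed d) :
    ‖y - (x - τ • f' x)‖ ^ 2 = ‖x - y‖ ^ 2 - 2 * τ * ⟪f' x, x - y⟫ + τ ^ 2 * ‖f' x‖ ^ 2 := by
  have h1 : y - (x - τ • f' x) = -(x - y) + τ • f' x := by module
  rw [h1, norm_add_sq_real, norm_neg, inner_neg_left, real_inner_smul_right, norm_smul,
    Real.norm_eq_abs, mul_pow, sq_abs, real_inner_comm]
  ring

lemma inner_quad_bound {f' : Ed d → Ed d} {L : ℝ} (hL : 0 < L)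
    (hLip : LipschitzWith L.toNNReal f') (x y : Ed d) :
    |⟪f' x, x - y⟫| ≤
      2 * ‖f' 0‖ + (‖f' 0‖ + 2 * L) * ‖x‖ ^ 2 + (‖f' 0‖ + L) * ‖y‖ ^ 2 := by
  have h1 : |⟪f' x, x - y⟫| ≤ ‖f' x‖ * ‖x - y‖ := abs_real_inner_le_norm _ _
  have h2 : ‖f' x‖ ≤ ‖f' 0‖ + L * ‖x‖ := f'_growth hL hLip x
  have h3 : ‖x - y‖ ≤ ‖x‖ + ‖y‖ := norm_sub_le _ _
  have ha := norm_nonneg x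
  have hb := norm_nonneg y
  have hA := norm_nonneg (f' 0)
  have hfp := norm_nonneg (f' x)
  nlinarith [sq_nonneg (‖x‖ - ‖y‖), sq_nonneg (‖x‖ - 1), sq_nonneg (‖y‖ - 1),
    mul_nonneg ha hb, hL.le]

lemma f'_sq_bound {f' : Ed d → Ed d} {L : ℝ} (hL : 0 < L)
    (hLip : LipschitzWith L.toNNReal f') (x : Ed d) :
    ‖f' x‖ ^ 2 ≤ 2 * ‖f' 0‖ ^ 2 + 2 * L ^ 2 * ‖x‖ ^ 2 := by
  have h2 : ‖f' x‖ ≤ ‖f' 0‖ + L * ‖x‖ := f'_growth hL hLip x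
  nlinarith [norm_nonneg (f' x), norm_nonneg (f' 0), norm_nonneg x, hL.le,
    sq_nonneg (‖f' 0‖ - L * ‖x‖)]

lemma F_quad_bound {F : Ed d → ℝ} {f' : Ed d → Ed d} (hFconv : ConvexOn ℝ Set.univ F)
    (hFgrad : ∀ x, HasGradientAt F (f' x) x)
    {L : ℝ} (hL : 0 < L) (hLip : LipschitzWith L.toNNReal f') (x : Ed d) :
    |F x| ≤ (|F 0| + ‖f' 0‖) + (‖f' 0‖ + L) * ‖x‖ ^ 2 := by
  have h := F_growth hFconv hFgrad hL hLip x
  have hx := norm_nonneg x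
  have hA := norm_nonneg (f' 0)
  nlinarith [sq_nonneg (‖x‖ - 1)]

/-- the JKO minimizer has finite energy -/
lemma jko_finite {H : Measure (Ed d) → EReal} (hHproper : ProperOn H) {τ : ℝ}
    {η ρ : Measure (Ed d)} (hmin : IsJKOMin H τ η ρ) : H ρ ≠ ⊤ := by
  obtain ⟨μ0, hμ0P2, hμ0⟩ := hHproper.2
  have h := hmin.2 μ0 hμ0P2
  intro htop
  unfold JKOEnergy at h
  rw [htop] at h
  rw [EReal.top_add_coe] at h
  have h2 := top_le_iff.mp h
  have hr : H μ0 ≠ ⊥ := hHproper.1 μ0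
  lift H μ0 to ℝ using ⟨hμ0, hr⟩ with r hrr
  rw [← EReal.coe_add] at h2
  exact EReal.coe_ne_top _ h2

end Helpers5
noncomputable section Helpers6

open MeasureTheory ENNReal Filter Topology

variable {d : ℕ}

lemma exists_optimal_plan {H : Measure (Ed d) → EReal} (hHconv : ConvexAlongGenGeod H)
    {μ ν : Measure (Ed d)} (hμ : μ ∈ P2 d) (hν : ν ∈ P2 d) :
    ∃ π : Measure (Ed d × Ed d), IsOptimalPlan π μ ν := by
  obtain ⟨curve, ⟨γ, hprob, hopt, -, -⟩, -⟩ := hHconv ν hν ν hν μ hμ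
  exact ⟨γ.map (fun z => (z.1, z.2.1)), hopt⟩

end Helpers6

local notation "⟪" x ", " y "⟫" => @inner ℝ _ _ x y

open MeasureTheory Filter Topology ENNReal

set_option maxHeartbeats 2000000 in
/-- Refined discrete EVI for the proximal-gradient step, for absolutely continuous
input `μ`:
`W2²(T_τ μ, ν) ≤ (1−τλ) W2²(μ,ν) − 2τ (G(T_τ μ) − G ν) − (1−τL) W2²(μ, T_τ μ)`,
written additively to avoid undefined subtraction in `EReal`. -/
theorem prox_grad_discrete_EVI_ac {d : ℕ}
    (F : Ed d → ℝ) (f' : Ed d → Ed d)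
    (hFconv : ConvexOn ℝ Set.univ F)
    (hFgrad : ∀ x, HasGradientAt F (f' x) x)
    (L : ℝ) (hL : 0 < L) (hLip : LipschitzWith L.toNNReal f')
    (lam : ℝ) (hlam : 0 ≤ lam)
    (hstrong : ConvexOn ℝ Set.univ (fun x => F x - lam / 2 * ‖x‖ ^ 2))
    (H : Measure (Ed d) → EReal)
    (hHproper : ProperOn H) (hHlsc : LscW2 H) (hHconv : ConvexAlongGenGeod H)
    (hHdom : ∀ μ : Measure (Ed d), H μ ≠ ⊤ → μ ≪ (volume : Measure (Ed d)))
    (hArgmin : ∃ μstar, IsArgminG (Gsum F H) μstar)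
    (J : ℝ → Measure (Ed d) → Measure (Ed d))
    (hJ : ∀ t : ℝ, 0 < t → ∀ η ∈ P2 d, IsJKOMin H t η (J t η))
    (τ : ℝ) (hτ0 : 0 < τ) (hτL : τ < 1 / L)
    (μ ν : Measure (Ed d)) (hμ : μ ∈ P2 d)
    (hμac : μ ≪ (volume : Measure (Ed d))) (hν : ν ∈ P2 d) :
    (((W2 (J τ (gradStep f' τ μ)) ν) ^ 2 : ℝ) : EReal)
        + ((2 * τ : ℝ) : EReal) * Gsum F H (J τ (gradStep f' τ μ)) ≤
      (((1 - τ * lam) * (W2 μ ν) ^ 2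
          - (1 - τ * L) * (W2 μ (J τ (gradStep f' τ μ))) ^ 2 : ℝ) : EReal)
        + ((2 * τ : ℝ) : EReal) * Gsum F H ν := by
  have hτL' : τ * L < 1 := by rw [← lt_div_iff₀ hL]; exact hτL
  have hτL0 : (0:ℝ) ≤ 1 - τ * L := by linarith
  have hf'cont : Continuous f' := hLip.continuous
  set T : Ed d → Ed d := fun x => x - τ • f' x with hT
  have hTcont : Continuous T := continuous_id.sub (hf'cont.const_smul τ)
  have hTmeas : Measurable T := hTcont.measurable
  have hFcont : Continuous F := continuous_iff_continuousAt.mpr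
    (fun x => ((hFgrad x).differentiableAt).continuousAt)
  set η := gradStep f' τ μ with hηdef
  have hηmap : η = μ.map T := rfl
  have hη : η ∈ P2 d := by
    rw [hηmap]
    refine p2_map hμ T hTmeas (2 * τ ^ 2 * ‖f' 0‖ ^ 2) (2 * (1 + τ * L) ^ 2)
      (by positivity) (by positivity) (fun x => ?_)
    have h1 : ‖T x‖ ≤ ‖x‖ + τ * ‖f' x‖ := by
      calc ‖T x‖ ≤ ‖x‖ + ‖τ • f' x‖ := norm_sub_le _ _
      _ = ‖x‖ + τ * ‖f' x‖ := by rw [norm_smul, Real.norm_of_nonneg hτ0.le]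
    have h2 : ‖f' x‖ ≤ ‖f' 0‖ + L * ‖x‖ := f'_growth hL hLip x
    have h3 : ‖T x‖ ≤ τ * ‖f' 0‖ + (1 + τ * L) * ‖x‖ := by
      nlinarith [mul_le_mul_of_nonneg_left h2 hτ0.le]
    have h4 : ‖T x‖ ^ 2 ≤ (τ * ‖f' 0‖ + (1 + τ * L) * ‖x‖) ^ 2 :=
      pow_le_pow_left₀ (norm_nonneg _) h3 2
    nlinarith [h4, sq_nonneg (τ * ‖f' 0‖ - (1 + τ * L) * ‖x‖)]
  set ρ := J τ η with hρdef
  have hρmin : IsJKOMin H τ η ρ := hJ τ hτ0 η hη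
  have hρ : ρ ∈ P2 d := hρmin.1
  have hHρtop : H ρ ≠ ⊤ := jko_finite hHproper hρmin
  have hHρbot : H ρ ≠ ⊥ := hHproper.1 ρ
  by_cases hHν : H ν = ⊤
  · have hG : Gsum F H ν = ⊤ := by
      unfold Gsum; rw [hHν, EReal.coe_add_top]
    rw [hG, EReal.coe_mul_top_of_pos (by positivity : (0:ℝ) < 2 * τ), EReal.coe_add_top]
    exact le_top
  obtain ⟨hρval, hHρ⟩ : ∃ r : ℝ, H ρ = (r : EReal) :=
    ⟨(H ρ).toReal, (EReal.coe_toReal hHρtop hHρbot).symm⟩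
  obtain ⟨hνval, hHνval⟩ : ∃ r : ℝ, H ν = (r : EReal) :=
    ⟨(H ν).toReal, (EReal.coe_toReal hHν (hHproper.1 ν)).symm⟩
  have hsqcont : Continuous (fun z : Ed d × Ed d => ‖z.1 - z.2‖ ^ 2) := by fun_prop
  have hsqbound : ∀ z : Ed d × Ed d, |‖z.1 - z.2‖ ^ 2| ≤ 0 + 2 * ‖z.1‖ ^ 2 + 2 * ‖z.2‖ ^ 2 := by
    intro z
    rw [abs_of_nonneg (by positivity)]
    have := sq_add_bound z.1 z.2; linarith
  ------------------------------------------------------------------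
  -- STEP A : JKO variational inequality along the generalized geodesic
  ------------------------------------------------------------------
  obtain ⟨curve, hgeo, hconvineq⟩ := hHconv ρ hρ ν hν η hη
  obtain ⟨γ3, hγ3prob, hopt2, hopt3, hcurve⟩ := hgeo
  haveI := hγ3prob
  have hp12m : Measurable (fun z : Ed d × Ed d × Ed d => (z.1, z.2.1)) := by fun_prop
  have hp13m : Measurable (fun z : Ed d × Ed d × Ed d => (z.1, z.2.2)) := by fun_prop
  have hp23m : Measurable (fun z : Ed d × Ed d × Ed d => (z.2.1, z.2.2)) := by fun_prop
  have hcpl12 : IsCoupling (γ3.map (fun z => (z.1, z.2.1))) η ρ := hopt2.1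
  have hcpl13 : IsCoupling (γ3.map (fun z => (z.1, z.2.2))) η ν := hopt3.1
  have hηmarg : γ3.map (fun z : Ed d × Ed d × Ed d => z.1) = η := by
    rw [← hcpl12.2.1, Measure.map_map measurable_fst hp12m]; rfl
  have hρmarg : γ3.map (fun z : Ed d × Ed d × Ed d => z.2.1) = ρ := by
    rw [← hcpl12.2.2, Measure.map_map measurable_snd hp12m]; rfl
  have hνmarg : γ3.map (fun z : Ed d × Ed d × Ed d => z.2.2) = ν := by
    rw [← hcpl13.2.2, Measure.map_map measurable_snd hp13m]; rfl
  have hcpl23 : IsCoupling (γ3.map (fun z => (z.2.1, z.2.2))) ρ ν := by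
    refine ⟨Measure.isProbabilityMeasure_map hp23m.aemeasurable, ?_, ?_⟩
    · rw [Measure.map_map measurable_fst hp23m]; exact hρmarg
    · rw [Measure.map_map measurable_snd hp23m]; exact hνmarg
  -- the three quadratic integrals over γ3
  set A := ∫ z : Ed d × Ed d × Ed d, ‖z.1 - z.2.1‖ ^ 2 ∂γ3 with hAdef
  set B := ∫ z : Ed d × Ed d × Ed d, ‖z.1 - z.2.2‖ ^ 2 ∂γ3 with hBdef
  set C := ∫ z : Ed d × Ed d × Ed d, ‖z.2.1 - z.2.2‖ ^ 2 ∂γ3 with hCdef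
  have hintA : Integrable (fun z : Ed d × Ed d × Ed d => ‖z.1 - z.2.1‖ ^ 2) γ3 := by
    have h := coupling_integrable hcpl12 hη hρ _ hsqcont 0 2 2 hsqbound
    exact (integrable_map_measure hsqcont.aestronglyMeasurable hp12m.aemeasurable).mp h
  have hintB : Integrable (fun z : Ed d × Ed d × Ed d => ‖z.1 - z.2.2‖ ^ 2) γ3 := by
    have h := coupling_integrable hcpl13 hη hν _ hsqcont 0 2 2 hsqbound
    exact (integrable_map_measure hsqcont.aestronglyMeasurable hp13m.aemeasurable).mp h
  have hintC : Integrable (fun z : Ed d × Ed d × Ed d => ‖z.2.1 - z.2.2‖ ^ 2) γ3 := by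
    have h := coupling_integrable hcpl23 hρ hν _ hsqcont 0 2 2 hsqbound
    exact (integrable_map_measure hsqcont.aestronglyMeasurable hp23m.aemeasurable).mp h
  have haA : (W2 ρ η) ^ 2 = A := by
    rw [W2_symm, W2_sq_eq_integral hopt2 hη hρ,
      integral_map hp12m.aemeasurable hsqcont.aestronglyMeasurable]
  have hbB : (W2 ν η) ^ 2 = B := by
    rw [W2_symm, W2_sq_eq_integral hopt3 hη hν,
      integral_map hp13m.aemeasurable hsqcont.aestronglyMeasurable]
  have hwρν : (W2 ρ ν) ^ 2 ≤ C := by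
    have h := W2_sq_le_integral hcpl23 hρ hν
    rwa [integral_map hp23m.aemeasurable hsqcont.aestronglyMeasurable] at h
  -- the key inequality for each t
  have keyIneq : ∀ t : ℝ, t ∈ Set.Ioo (0:ℝ) 1 →
      hρval + 1/(2*τ)*A + (1-t)*C*(1/(2*τ)) ≤ hνval + 1/(2*τ)*B := by
    intro t ht
    have htIcc : t ∈ Set.Icc (0:ℝ) 1 := ⟨ht.1.le, ht.2.le⟩
    have hct := hcurve t htIcc
    have hctm : Measurable (fun z : Ed d × Ed d × Ed d => (1-t) • z.2.1 + t • z.2.2) := by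
      fun_prop
    have hnormct : ∀ u v : Ed d, ‖(1-t) • u + t • v‖ ^ 2 ≤ 2*‖u‖^2 + 2*‖v‖^2 := by
      intro u v
      have h1 : ‖(1-t) • u + t • v‖ ≤ ‖u‖ + ‖v‖ := by
        calc ‖(1-t) • u + t • v‖ ≤ ‖(1-t)•u‖ + ‖t•v‖ := norm_add_le _ _
        _ = |1 - t| * ‖u‖ + |t| * ‖v‖ := by
            rw [norm_smul, norm_smul, Real.norm_eq_abs, Real.norm_eq_abs]
        _ ≤ ‖u‖ + ‖v‖ := by
            rw [abs_of_nonneg (by linarith [ht.2] : (0:ℝ) ≤ 1-t), abs_of_nonneg ht.1.le]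
            nlinarith [norm_nonneg u, norm_nonneg v, ht.1.le, ht.2.le]
      nlinarith [pow_le_pow_left₀ (norm_nonneg ((1-t) • u + t • v)) h1 2,
        sq_nonneg (‖u‖ - ‖v‖), norm_nonneg u, norm_nonneg v]
    have hcurveP2 : curve t ∈ P2 d := by
      rw [hct]
      refine ⟨Measure.isProbabilityMeasure_map hctm.aemeasurable, ?_⟩
      rw [lintegral_map (by fun_prop) hctm]
      calc ∫⁻ z, ENNReal.ofReal (‖(1-t) • z.2.1 + t • z.2.2‖ ^ 2) ∂γ3
          ≤ ∫⁻ z, (2 * ENNReal.ofReal (‖z.2.1‖^2) + 2 * ENNReal.ofReal (‖z.2.2‖^2)) ∂γ3 := by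
            refine lintegral_mono fun z => ?_
            calc ENNReal.ofReal (‖(1-t) • z.2.1 + t • z.2.2‖ ^ 2)
                ≤ ENNReal.ofReal (2*‖z.2.1‖^2 + 2*‖z.2.2‖^2) :=
                  ENNReal.ofReal_le_ofReal (hnormct _ _)
            _ ≤ 2 * ENNReal.ofReal (‖z.2.1‖^2) + 2 * ENNReal.ofReal (‖z.2.2‖^2) := by
                rw [ENNReal.ofReal_add (by positivity) (by positivity)]
                gcongr <;> rw [ENNReal.ofReal_mul (by norm_num)] <;> simp
        _ = 2 * m2 ρ + 2 * m2 ν := by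
            rw [lintegral_add_left (by fun_prop), lintegral_const_mul _ (by fun_prop),
              lintegral_const_mul _ (by fun_prop)]
            have e1 : ∫⁻ z : Ed d × Ed d × Ed d, ENNReal.ofReal (‖z.2.1‖^2) ∂γ3 = m2 ρ := by
              rw [← hρmarg]; unfold m2
              rw [lintegral_map (by fun_prop) (by fun_prop)]
            have e2 : ∫⁻ z : Ed d × Ed d × Ed d, ENNReal.ofReal (‖z.2.2‖^2) ∂γ3 = m2 ν := by
              rw [← hνmarg]; unfold m2
              rw [lintegral_map (by fun_prop) (by fun_prop)]
            rw [e1, e2]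
        _ < ⊤ := by have := p2_m2 hρ; have := p2_m2 hν; finiteness
    have hκm : Measurable (fun z : Ed d × Ed d × Ed d => ((1-t) • z.2.1 + t • z.2.2, z.1)) := by
      fun_prop
    have hκ : IsCoupling (γ3.map (fun z => ((1-t) • z.2.1 + t • z.2.2, z.1))) (curve t) η := by
      refine ⟨Measure.isProbabilityMeasure_map hκm.aemeasurable, ?_, ?_⟩
      · rw [Measure.map_map measurable_fst hκm, hct]
        rfl
      · rw [Measure.map_map measurable_snd hκm]; exact hηmarg
    have hWt : (W2 (curve t) η) ^ 2 ≤ (1-t)*A + t*B - t*(1-t)*C := by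
      have h := W2_sq_le_integral hκ hcurveP2 hη
      rw [integral_map hκm.aemeasurable hsqcont.aestronglyMeasurable] at h
      have hptw : (fun z : Ed d × Ed d × Ed d => ‖((1-t) • z.2.1 + t • z.2.2) - z.1‖ ^ 2)
          = fun z => (1-t)*‖z.1 - z.2.1‖^2 + t*‖z.1 - z.2.2‖^2 - t*(1-t)*‖z.2.1 - z.2.2‖^2 :=
        funext fun z => by
          rw [interp_identity, norm_sub_rev z.2.1 z.1, norm_sub_rev z.2.2 z.1]
      rw [hptw] at h
      have i1 : Integrable (fun z : Ed d × Ed d × Ed d => (1-t)*‖z.1 - z.2.1‖^2) γ3 :=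
        hintA.const_mul _
      have i2 : Integrable (fun z : Ed d × Ed d × Ed d => t*‖z.1 - z.2.2‖^2) γ3 :=
        hintB.const_mul _
      have i3 : Integrable (fun z : Ed d × Ed d × Ed d => t*(1-t)*‖z.2.1 - z.2.2‖^2) γ3 :=
        hintC.const_mul _
      have i12 : Integrable (fun z : Ed d × Ed d × Ed d =>
          (1-t)*‖z.1 - z.2.1‖^2 + t*‖z.1 - z.2.2‖^2) γ3 := i1.add i2
      rw [integral_sub i12 i3, integral_add i1 i2, integral_const_mul _ _,
        integral_const_mul _ _, integral_const_mul _ _] at h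
      exact h
    -- EReal chain
    have hmin := hρmin.2 (curve t) hcurveP2
    have hcv := hconvineq t htIcc
    unfold JKOEnergy at hmin
    rw [hHρ, ← EReal.coe_add] at hmin
    rw [hHρ, hHνval, ← EReal.coe_mul, ← EReal.coe_mul, ← EReal.coe_add] at hcv
    have hchain : ((hρval + 1/(2*τ) * (W2 ρ η)^2 : ℝ) : EReal)
        ≤ (((1-t)*hρval + t*hνval + 1/(2*τ) * (W2 (curve t) η)^2 : ℝ) : EReal) := by
      calc ((hρval + 1/(2*τ) * (W2 ρ η)^2 : ℝ) : EReal)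
          ≤ H (curve t) + ((1/(2*τ) * (W2 (curve t) η)^2 : ℝ) : EReal) := hmin
      _ ≤ (((1-t)*hρval + t*hνval : ℝ) : EReal)
            + ((1/(2*τ) * (W2 (curve t) η)^2 : ℝ) : EReal) := add_le_add_left hcv _
      _ = (((1-t)*hρval + t*hνval + 1/(2*τ) * (W2 (curve t) η)^2 : ℝ) : EReal) := by
          rw [← EReal.coe_add]
    rw [EReal.coe_le_coe_iff] at hchain
    rw [haA] at hchain
    have hineq2 : 1/(2*τ)*(W2 (curve t) η)^2 ≤ 1/(2*τ)*((1-t)*A + t*B - t*(1-t)*C) :=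
      mul_le_mul_of_nonneg_left hWt (by positivity)
    have hmul : t * (hρval + 1/(2*τ)*A + (1-t)*C*(1/(2*τ)))
        ≤ t * (hνval + 1/(2*τ)*B) := by linarith [hchain, hineq2]
    exact le_of_mul_le_mul_left hmul ht.1
  -- pass to the limit t → 0
  have stepA : hρval + 1/(2*τ)*A + C*(1/(2*τ)) ≤ hνval + 1/(2*τ)*B := by
    have hseq : ∀ n : ℕ,
        hρval + 1/(2*τ)*A + (1 - ((n:ℝ)+2)⁻¹)*C*(1/(2*τ)) ≤ hνval + 1/(2*τ)*B := by
      intro n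
      refine keyIneq _ ⟨by positivity, ?_⟩
      rw [inv_lt_one_iff₀]
      right
      have : (0:ℝ) ≤ (n:ℝ) := Nat.cast_nonneg n
      linarith
    have h0 : Tendsto (fun n : ℕ => ((n:ℝ)+2)⁻¹) atTop (𝓝 0) := by
      have h1 : Tendsto (fun n : ℕ => ((n:ℝ)+2)) atTop atTop :=
        tendsto_atTop_add_const_right atTop 2 tendsto_natCast_atTop_atTop
      exact h1.inv_tendsto_atTop
    have hcont : Continuous (fun r : ℝ => hρval + 1/(2*τ)*A + (1-r)*C*(1/(2*τ))) := by
      fun_prop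
    have hlim := (hcont.tendsto 0).comp h0
    have hfinal := le_of_tendsto hlim (Eventually.of_forall hseq)
    simpa using hfinal
  ------------------------------------------------------------------
  -- STEP B : explicit gradient step estimates
  ------------------------------------------------------------------
  obtain ⟨π1, hπ1⟩ := exists_optimal_plan hHconv hμ hν
  obtain ⟨π, hπ⟩ := exists_optimal_plan hHconv hρ hη
  haveI := hπ1.1.1
  haveI := hπ.1.1
  obtain ⟨S, hScont, hTS, hST⟩ := exists_inverse hL hLip hτ0 hτL'
  have hSmeas : Measurable S := hScont.measurable
  have hμback : η.map S = μ := by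
    rw [hηmap, Measure.map_map hSmeas hTmeas]
    have hid : (S ∘ T) = id := funext fun x => hST x
    rw [hid, Measure.map_id]
  set σ := π.map (fun p : Ed d × Ed d => (p.1, S p.2)) with hσdef
  have hσcpl : IsCoupling σ ρ μ := by
    have h := coupling_map_right hπ.1 S hSmeas
    rwa [hμback] at h
  set W := ∫ z : Ed d × Ed d, ‖z.1 - z.2‖ ^ 2 ∂π1 with hWdef
  have hWμν : (W2 μ ν) ^ 2 = W := W2_sq_eq_integral hπ1 hμ hν
  set m := ∫ z : Ed d × Ed d, ‖z.1 - z.2‖ ^ 2 ∂σ with hmdef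
  have hMρm : (W2 μ ρ) ^ 2 ≤ m := by
    rw [W2_symm]
    exact W2_sq_le_integral hσcpl hρ hμ
  have hσm : Measurable (fun p : Ed d × Ed d => (p.1, S p.2)) :=
    measurable_fst.prodMk (hSmeas.comp measurable_snd)
  have hTScont : Continuous (fun p : Ed d × Ed d => ‖p.1 - T p.2‖ ^ 2) := by fun_prop
  have haσ : (W2 ρ η) ^ 2 = ∫ p : Ed d × Ed d, ‖p.1 - T p.2‖ ^ 2 ∂σ := by
    rw [W2_sq_eq_integral hπ hρ hη, hσdef,
      integral_map hσm.aemeasurable hTScont.aestronglyMeasurable]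
    refine integral_congr_ae (Eventually.of_forall fun p => ?_)
    simp only
    rw [show T (S p.2) = p.2 from hTS p.2]
  -- data for π1 : coupling of μ and ν
  set Fμ := ∫ x, F x ∂μ with hFμdef
  set Fν := ∫ x, F x ∂ν with hFνdef
  set Fρ := ∫ x, F x ∂ρ with hFρdef
  set N := ∫ x, ‖f' x‖ ^ 2 ∂μ with hNdef
  set I1 := ∫ p : Ed d × Ed d, ⟪f' p.1, p.1 - p.2⟫ ∂π1 with hI1def
  set I2 := ∫ p : Ed d × Ed d, ⟪f' p.2, p.2 - p.1⟫ ∂σ with hI2def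
  have hinncont1 : Continuous (fun p : Ed d × Ed d => ⟪f' p.1, p.1 - p.2⟫) :=
    (hf'cont.comp continuous_fst).inner (continuous_fst.sub continuous_snd)
  have hinncont2 : Continuous (fun p : Ed d × Ed d => ⟪f' p.2, p.2 - p.1⟫) :=
    (hf'cont.comp continuous_snd).inner (continuous_snd.sub continuous_fst)
  have hFscont : Continuous (fun x : Ed d => ‖f' x‖ ^ 2) := by fun_prop
  have hFasm : AEStronglyMeasurable F μ := hFcont.aestronglyMeasurable
  -- integrabilities over π1
  have hint1 : Integrable (fun p : Ed d × Ed d => ‖p.1 - p.2‖ ^ 2) π1 :=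
    coupling_integrable hπ1.1 hμ hν _ hsqcont 0 2 2 hsqbound
  have hint2 : Integrable (fun p : Ed d × Ed d => ⟪f' p.1, p.1 - p.2⟫) π1 :=
    coupling_integrable hπ1.1 hμ hν _ hinncont1 (2*‖f' 0‖) (‖f' 0‖ + 2*L) (‖f' 0‖ + L)
      (fun z => inner_quad_bound hL hLip z.1 z.2)
  have hint3 : Integrable (fun p : Ed d × Ed d => ‖f' p.1‖ ^ 2) π1 :=
    coupling_integrable hπ1.1 hμ hν _ (hFscont.comp continuous_fst)
      (2*‖f' 0‖^2) (2*L^2) 0 (fun z => by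
        rw [abs_of_nonneg (by positivity)]
        have := f'_sq_bound hL hLip z.1; linarith)
  have hintF1 : Integrable (fun p : Ed d × Ed d => F p.1) π1 :=
    coupling_integrable hπ1.1 hμ hν _ (hFcont.comp continuous_fst)
      (|F 0| + ‖f' 0‖) (‖f' 0‖ + L) 0 (fun z => by
        have := F_quad_bound hFconv hFgrad hL hLip z.1; linarith)
  have hintF2 : Integrable (fun p : Ed d × Ed d => F p.2) π1 :=
    coupling_integrable hπ1.1 hμ hν _ (hFcont.comp continuous_snd)
      (|F 0| + ‖f' 0‖) 0 (‖f' 0‖ + L) (fun z => by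
        have := F_quad_bound hFconv hFgrad hL hLip z.2; linarith)
  -- integrabilities over σ
  have hint1σ : Integrable (fun p : Ed d × Ed d => ‖p.1 - p.2‖ ^ 2) σ :=
    coupling_integrable hσcpl hρ hμ _ hsqcont 0 2 2 hsqbound
  have hint2σ : Integrable (fun p : Ed d × Ed d => ⟪f' p.2, p.2 - p.1⟫) σ :=
    coupling_integrable hσcpl hρ hμ _ hinncont2 (2*‖f' 0‖) (‖f' 0‖ + L) (‖f' 0‖ + 2*L)
      (fun z => by
        have h := inner_quad_bound hL hLip z.2 z.1
        linarith)
  have hint3σ : Integrable (fun p : Ed d × Ed d => ‖f' p.2‖ ^ 2) σ :=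
    coupling_integrable hσcpl hρ hμ _ (hFscont.comp continuous_snd)
      (2*‖f' 0‖^2) 0 (2*L^2) (fun z => by
        rw [abs_of_nonneg (by positivity)]
        have := f'_sq_bound hL hLip z.2; linarith)
  have hintF1σ : Integrable (fun p : Ed d × Ed d => F p.1) σ :=
    coupling_integrable hσcpl hρ hμ _ (hFcont.comp continuous_fst)
      (|F 0| + ‖f' 0‖) (‖f' 0‖ + L) 0 (fun z => by
        have := F_quad_bound hFconv hFgrad hL hLip z.1; linarith)
  have hintF2σ : Integrable (fun p : Ed d × Ed d => F p.2) σ :=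
    coupling_integrable hσcpl hρ hμ _ (hFcont.comp continuous_snd)
      (|F 0| + ‖f' 0‖) 0 (‖f' 0‖ + L) (fun z => by
        have := F_quad_bound hFconv hFgrad hL hLip z.2; linarith)
  -- b ≤ W - 2τ I1 + τ² N
  have hκ1m : Measurable (fun p : Ed d × Ed d => (p.2, T p.1)) :=
    measurable_snd.prodMk (hTmeas.comp measurable_fst)
  have hκ1 : IsCoupling (π1.map (fun p => (p.2, T p.1))) ν η := by
    refine ⟨Measure.isProbabilityMeasure_map hκ1m.aemeasurable, ?_, ?_⟩
    · rw [Measure.map_map measurable_fst hκ1m]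
      exact hπ1.1.2.2
    · rw [Measure.map_map measurable_snd hκ1m]
      have : (Prod.snd ∘ fun p : Ed d × Ed d => (p.2, T p.1)) = T ∘ Prod.fst := rfl
      rw [this, ← Measure.map_map hTmeas measurable_fst, hπ1.1.2.1, hηmap]
  have hbW : (W2 ν η) ^ 2 ≤ W - 2*τ*I1 + τ^2*N := by
    have h := W2_sq_le_integral hκ1 hν hη
    rw [integral_map hκ1m.aemeasurable hsqcont.aestronglyMeasurable] at h
    have hptw : (fun p : Ed d × Ed d => ‖p.2 - T p.1‖ ^ 2)
        = fun p => ‖p.1 - p.2‖^2 - 2*τ*⟪f' p.1, p.1 - p.2⟫ + τ^2*‖f' p.1‖^2 :=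
      funext fun p => by
        rw [show T p.1 = p.1 - τ • f' p.1 from rfl, expand_T]
    rw [hptw] at h
    have i1 : Integrable (fun p : Ed d × Ed d => 2*τ*⟪f' p.1, p.1 - p.2⟫) π1 :=
      hint2.const_mul _
    have i2 : Integrable (fun p : Ed d × Ed d => τ^2*‖f' p.1‖^2) π1 :=
      hint3.const_mul _
    have i3 : Integrable (fun p : Ed d × Ed d =>
        ‖p.1 - p.2‖^2 - 2*τ*⟪f' p.1, p.1 - p.2⟫) π1 := hint1.sub i1
    rw [integral_add i3 i2, integral_sub hint1 i1, integral_const_mul _ _,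
      integral_const_mul _ _] at h
    have hN1 : ∫ p : Ed d × Ed d, ‖f' p.1‖ ^ 2 ∂π1 = N :=
      integral_fst hπ1.1.2.1 _ (hFscont.aestronglyMeasurable)
    rw [hN1] at h
    exact h
  -- a = m - 2τ I2 + τ² N
  have haσ2 : (W2 ρ η) ^ 2 = m - 2*τ*I2 + τ^2*N := by
    rw [haσ]
    have hptw : (fun p : Ed d × Ed d => ‖p.1 - T p.2‖ ^ 2)
        = fun p => ‖p.2 - p.1‖^2 - 2*τ*⟪f' p.2, p.2 - p.1⟫ + τ^2*‖f' p.2‖^2 :=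
      funext fun p => by
        rw [show T p.2 = p.2 - τ • f' p.2 from rfl, expand_T]
    have hflip : Integrable (fun p : Ed d × Ed d => ‖p.2 - p.1‖ ^ 2) σ := by
      have : (fun p : Ed d × Ed d => ‖p.2 - p.1‖ ^ 2)
          = fun p : Ed d × Ed d => ‖p.1 - p.2‖ ^ 2 :=
        funext fun p => by rw [norm_sub_rev]
      rw [this]; exact hint1σ
    rw [hptw]
    have i1 : Integrable (fun p : Ed d × Ed d => 2*τ*⟪f' p.2, p.2 - p.1⟫) σ :=
      hint2σ.const_mul _
    have i2 : Integrable (fun p : Ed d × Ed d => τ^2*‖f' p.2‖^2) σ :=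
      hint3σ.const_mul _
    have i3 : Integrable (fun p : Ed d × Ed d =>
        ‖p.2 - p.1‖^2 - 2*τ*⟪f' p.2, p.2 - p.1⟫) σ := hflip.sub i1
    rw [integral_add i3 i2, integral_sub hflip i1, integral_const_mul _ _, integral_const_mul _ _]
    have hflipval : ∫ p : Ed d × Ed d, ‖p.2 - p.1‖ ^ 2 ∂σ = m := by
      rw [hmdef]
      refine integral_congr_ae (Eventually.of_forall fun p => ?_)
      simp only
      rw [norm_sub_rev]
    have hN2 : ∫ p : Ed d × Ed d, ‖f' p.2‖ ^ 2 ∂σ = N := by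
      have := integral_snd hσcpl.2.2 (fun x => ‖f' x‖^2) hFscont.aestronglyMeasurable
      rw [this, hNdef]
    rw [hflipval, hN2]
  -- convexity bounds on I1, I2
  have hI1 : Fμ - Fν + lam/2*W ≤ I1 := by
    have hptw : ∀ p : Ed d × Ed d,
        F p.1 - F p.2 + lam/2*‖p.1 - p.2‖^2 ≤ ⟪f' p.1, p.1 - p.2⟫ := by
      intro p
      have h := strong_lower hFgrad hstrong p.1 p.2
      have h2 : ⟪f' p.1, p.2 - p.1⟫ = -⟪f' p.1, p.1 - p.2⟫ := by
        rw [← inner_neg_right]; congr 1; abel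
      have h3 : ‖p.2 - p.1‖ = ‖p.1 - p.2‖ := norm_sub_rev _ _
      rw [h2, h3] at h
      linarith
    have i1 : Integrable (fun p : Ed d × Ed d => F p.1 - F p.2) π1 := hintF1.sub hintF2
    have i2 : Integrable (fun p : Ed d × Ed d => lam/2*‖p.1 - p.2‖^2) π1 :=
      hint1.const_mul _
    have i3 : Integrable (fun p : Ed d × Ed d =>
        F p.1 - F p.2 + lam/2*‖p.1 - p.2‖^2) π1 := i1.add i2
    have hmono := integral_mono i3 hint2 hptw
    rw [integral_add i1 i2, integral_sub hintF1 hintF2, integral_const_mul _ _] at hmono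
    have e1 : ∫ p : Ed d × Ed d, F p.1 ∂π1 = Fμ :=
      integral_fst hπ1.1.2.1 _ hFcont.aestronglyMeasurable
    have e2 : ∫ p : Ed d × Ed d, F p.2 ∂π1 = Fν :=
      integral_snd hπ1.1.2.2 _ hFcont.aestronglyMeasurable
    rw [e1, e2] at hmono
    exact hmono
  have hI2 : I2 ≤ Fμ - Fρ + L/2*m := by
    have hptw : ∀ p : Ed d × Ed d,
        ⟪f' p.2, p.2 - p.1⟫ ≤ F p.2 - F p.1 + L/2*‖p.1 - p.2‖^2 := by
      intro p
      have h := descent_lemma hFgrad hL hLip p.2 p.1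
      have h2 : ⟪f' p.2, p.2 - p.1⟫ = -⟪f' p.2, p.1 - p.2⟫ := by
        rw [← inner_neg_right]; congr 1; abel
      rw [h2]
      linarith
    have i1 : Integrable (fun p : Ed d × Ed d => F p.2 - F p.1) σ := hintF2σ.sub hintF1σ
    have i2 : Integrable (fun p : Ed d × Ed d => L/2*‖p.1 - p.2‖^2) σ :=
      hint1σ.const_mul _
    have i3 : Integrable (fun p : Ed d × Ed d =>
        F p.2 - F p.1 + L/2*‖p.1 - p.2‖^2) σ := i1.add i2
    have hmono := integral_mono hint2σ i3 hptw
    rw [integral_add i1 i2, integral_sub hintF2σ hintF1σ, integral_const_mul _ _] at hmono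
    have e1 : ∫ p : Ed d × Ed d, F p.1 ∂σ = Fρ :=
      integral_fst hσcpl.2.1 _ hFcont.aestronglyMeasurable
    have e2 : ∫ p : Ed d × Ed d, F p.2 ∂σ = Fμ :=
      integral_snd hσcpl.2.2 _ hFcont.aestronglyMeasurable
    rw [e1, e2] at hmono
    exact hmono
  ------------------------------------------------------------------
  -- FINAL assembly
  ------------------------------------------------------------------
  -- convert stepA to multiplied form
  have h2τ : (0:ℝ) < 2*τ := by positivity
  have stepA' : 2*τ*hρval + A + C ≤ 2*τ*hνval + B := by
    have h := mul_le_mul_of_nonneg_left stepA h2τ.le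
    have hτne : τ ≠ 0 := hτ0.ne'
    have e1 : 2*τ*(hρval + 1/(2*τ)*A + C*(1/(2*τ))) = 2*τ*hρval + A + C := by
      field_simp
    have e2 : 2*τ*(hνval + 1/(2*τ)*B) = 2*τ*hνval + B := by
      field_simp
    rw [e1, e2] at h
    exact h
  -- real final inequality
  have hfin : (W2 ρ ν)^2 + 2*τ*(Fρ + hρval)
      ≤ (1 - τ*lam)*(W2 μ ν)^2 - (1 - τ*L)*(W2 μ ρ)^2 + 2*τ*(Fν + hνval) := by
    have hI1' : 2*τ*(Fμ - Fν + lam/2*W) ≤ 2*τ*I1 :=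
      mul_le_mul_of_nonneg_left hI1 h2τ.le
    have hI2' : 2*τ*I2 ≤ 2*τ*(Fμ - Fρ + L/2*m) :=
      mul_le_mul_of_nonneg_left hI2 h2τ.le
    have hm' : (1-τ*L)*(W2 μ ρ)^2 ≤ (1-τ*L)*m :=
      mul_le_mul_of_nonneg_left hMρm hτL0
    have haA' : A = m - 2*τ*I2 + τ^2*N := by rw [← haA]; exact haσ2
    have hb2 : B = (W2 ν η)^2 := hbB.symm
    rw [hWμν]
    linarith [stepA', hwρν, hbW, hI1', hI2', hm', haA', hb2]
  -- transfer to EReal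
  have hGρ : Gsum F H ρ = ((Fρ + hρval : ℝ) : EReal) := by
    unfold Gsum; rw [hHρ, ← EReal.coe_add, hFρdef]
  have hGν : Gsum F H ν = ((Fν + hνval : ℝ) : EReal) := by
    unfold Gsum; rw [hHνval, ← EReal.coe_add, hFνdef]
  rw [hGρ, hGν, ← EReal.coe_mul, ← EReal.coe_mul, ← EReal.coe_add, ← EReal.coe_add]
  rw [EReal.coe_le_coe_iff]
  linarith [hfin]
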